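/- arXiv:1308.5325 — 3 statements merged into one kernel-verified Lean document; each statement's English description precedes it below -/
import Mathlib

section
/- Two configurations f and g on the complete graph K_n are toppling equivalent if and only if deg(f) = deg(g) and for all 1 <= i, j <= n, f_i - f_j is congruent to g_i - g_j modulo n. -/
/-- Laplacian configuration of the complete graph `K n`: value `n-1` at `i`, `-1` elsewhere. -/
def lapK (n : ℕ) (i : Fin n) : Fin n → ℤ := fun j => if j = i then (n : ℤ) - 1 else -1

/-- Toppling equivalence on `K n`. -/
def topK (n : ℕ) (f g : Fin n → ℤ) : Prop :=
  ∃ a : Fin n → ℤ, f - g = ∑ i, a i • lapK n i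

lemma lapK_sum_apply (n : ℕ) (a : Fin n → ℤ) (j : Fin n) :
    (∑ i, a i • lapK n i) j = n * a j - ∑ i, a i := by
  simp only [Finset.sum_apply, Pi.smul_apply, lapK, smul_eq_mul]
  have h : ∀ i : Fin n, a i * (if j = i then (n:ℤ) - 1 else -1)
      = (if i = j then (n:ℤ) * a i else 0) - a i := by
    intro i
    by_cases h : i = j
    · subst h; simp; ring
    · rw [if_neg (fun hh => h hh.symm), if_neg h]; ring
  rw [Finset.sum_congr rfl fun i _ => h i, Finset.sum_sub_distrib,
    Finset.sum_ite_eq' Finset.univ j (fun i => (n:ℤ) * a i)]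
  simp

theorem stmt1 (n : ℕ) (hn : 2 ≤ n) (f g : Fin n → ℤ) :
    topK n f g ↔
      ((∑ i, f i) = (∑ i, g i) ∧
        ∀ i j : Fin n, f i - f j ≡ g i - g j [ZMOD (n : ℤ)]) := by
  constructor
  · rintro ⟨a, ha⟩
    have hh : ∀ j, f j - g j = n * a j - ∑ i, a i := by
      intro j
      have := congrFun ha j
      rw [lapK_sum_apply] at this
      simpa using this
    constructor
    · have hs : ∑ j, (f j - g j) = ∑ j, ((n:ℤ) * a j - ∑ i, a i) :=
        Finset.sum_congr rfl fun j _ => hh j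
      rw [Finset.sum_sub_distrib, Finset.sum_sub_distrib, ← Finset.mul_sum,
        Finset.sum_const, Finset.card_univ, Fintype.card_fin, nsmul_eq_mul] at hs
      linarith
    · intro i j
      rw [Int.modEq_iff_dvd]
      refine ⟨a j - a i, ?_⟩
      have h1 := hh i
      have h2 := hh j
      rw [mul_sub]
      linarith
  · rintro ⟨hdeg, hcong⟩
    set i0 : Fin n := ⟨0, by omega⟩ with hi0
    have hdvd : ∀ j, (n:ℤ) ∣ (f j - g j) - (f i0 - g i0) := by
      intro j
      obtain ⟨c, hc⟩ := Int.modEq_iff_dvd.mp (hcong j i0)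
      refine ⟨-c, ?_⟩
      rw [mul_neg]
      linarith
    set a : Fin n → ℤ := fun j => ((f j - g j) - (f i0 - g i0)) / n with hadef
    have hn0 : (n:ℤ) ≠ 0 := by exact_mod_cast (by omega : n ≠ 0)
    have hmul : ∀ j, (n:ℤ) * a j = (f j - g j) - (f i0 - g i0) :=
      fun j => Int.mul_ediv_cancel' (hdvd j)
    have hsumA : ∑ i, a i = -(f i0 - g i0) := by
      have h1 : (n:ℤ) * ∑ i, a i = ∑ i, ((f i - g i) - (f i0 - g i0)) := by
        rw [Finset.mul_sum]
        exact Finset.sum_congr rfl fun i _ => hmul i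
      rw [Finset.sum_sub_distrib, Finset.sum_sub_distrib, Finset.sum_const,
        Finset.card_univ, Fintype.card_fin, nsmul_eq_mul] at h1
      have h2 : (n:ℤ) * ∑ i, a i = (n:ℤ) * (-(f i0 - g i0)) := by
        rw [h1]; ring_nf; linarith [hdeg]
      exact mul_left_cancel₀ hn0 h2
    refine ⟨a, ?_⟩
    funext j
    rw [Pi.sub_apply, lapK_sum_apply, hsumA]
    have := hmul j
    linarith
end

section
/- Rank formula for K_n: let f be a parking configuration on K_n with sorted first n-1 entries, w = phi(f) the associated word in D_n with height sequence eta_1, ..., eta_{n-1} (eta_i = (number of a's) - (number of b's) in the prefix of w preceding the i-th occurrence of a). Writing f_n + 1 = q(n-1) + r with 0 <= r < n-1, the rank satisfies 1 + rho(f) = sum_{i=1}^{n-1} max(0, q - eta_i + [i <= r]). -/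
/-!
On `K n` the Laplacian of `a` is `n • a - (∑ a) • 1`, so `f` is effective iff
`c ≤ ∑ i, ⌊(f i + c) / n⌋` for some integer `c` (`floorSum`). By Hermite's identity
`∑_{c < n} ⌊(x + c) / n⌋ = x`, the degree of `λ ≥ 0` is
`∑_{c < n} (floorSum f c - floorSum (f - λ) c)`, and when `f - λ` is not effective each summand
is at least `max 0 (floorSum f c + 1 - c)`; this bounds `1 + rank f` from below.

The bound is attained by `λ i = max 0 (f i - T i)` with `T i = i - q - [i < r]`, which is the
summand of the formula (`η_i = i - f i` with 0-based indices). The targets `T i`, together with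
`f_sink - q * n`, form `n` consecutive integers, which makes `f - λ` non-effective. For each `c`,
the floors of `f i + c` and of `T i + c` are monotone in `i` with spread at most one (here the
parking condition `f i ≤ i` enters), so one sequence dominates the other and the summand for `c`
is exactly `max 0 (floorSum f c + 1 - c)`.
-/
/-- Laplacian configuration `Δ^(i)` of the multigraph given by edge-multiplicity matrix `e`. -/
def lapG {n : ℕ} (e : Fin n → Fin n → ℕ) (i : Fin n) : Fin n → ℤ :=
  fun j => if j = i then (∑ k, (e i k : ℤ)) else -(e i j : ℤ)

/-- Toppling equivalence: `f - g` lies in the lattice generated by the `Δ^(i)`. -/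
def topG {n : ℕ} (e : Fin n → Fin n → ℕ) (f g : Fin n → ℤ) : Prop :=
  ∃ a : Fin n → ℤ, f - g = ∑ i, a i • lapG e i

/-- `L_G`-effectiveness: toppling equivalent to a nonnegative configuration. -/
def effG {n : ℕ} (e : Fin n → Fin n → ℕ) (f : Fin n → ℤ) : Prop :=
  ∃ g : Fin n → ℤ, topG e f g ∧ ∀ i, 0 ≤ g i

/-- The Baker–Norine rank:
`rankG e f + 1 = min {deg λ | λ ≥ 0, f - λ not L_G-effective}`. -/
noncomputable def rankG {n : ℕ} (e : Fin n → Fin n → ℕ) (f : Fin n → ℤ) : ℤ :=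
  sInf {d : ℤ | ∃ lam : Fin n → ℤ,
    (∀ i, 0 ≤ lam i) ∧ (∑ i, lam i) = d ∧ ¬ effG e (f - lam)} - 1

/-- Edge multiplicities of the complete graph `K n`. -/
def eK (n : ℕ) : Fin n → Fin n → ℕ := fun i j => if i = j then 0 else 1

/-- Parking configuration on `K n` (with sink `n`, the last vertex). -/
def parkingK {n : ℕ} (f : Fin n → ℤ) : Prop :=
  (∀ i : Fin n, (i : ℕ) < n - 1 → 0 ≤ f i) ∧
    ∀ Y : Finset (Fin n), Y.Nonempty → (∀ i ∈ Y, (i : ℕ) < n - 1) →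
      ∃ k ∈ Y, f k < (n : ℤ) - (Y.card : ℤ)

theorem Int.sum_range_add_ediv {n : ℕ} (hn : 0 < n) (x : ℤ) :
    ∑ k ∈ Finset.range n, (x + k) / n = x := by
  have hn' : (n : ℤ) ≠ 0 := by positivity
  have hstep : ∀ y : ℤ,
      ∑ k ∈ Finset.range n, (y + 1 + k) / n = ∑ k ∈ Finset.range n, (y + k) / n + 1 := by
    intro y
    have hshift := (Finset.sum_range_succ (fun k : ℕ => (y + k) / n) n).symm.trans
      (Finset.sum_range_succ' (fun k : ℕ => (y + k) / n) n)
    have hlast : (y + n) / n = y / n + 1 := by simpa using Int.add_mul_ediv_right y 1 hn'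
    simp only [Nat.cast_add, Nat.cast_one, Nat.cast_zero, add_zero, hlast] at hshift
    simp only [add_right_comm y 1]
    simp only [add_assoc] at hshift ⊢
    linarith
  have hzero : ∑ k ∈ Finset.range n, ((0 : ℤ) + k) / n = 0 :=
    Finset.sum_eq_zero fun k hk => Int.ediv_eq_zero_of_lt (by positivity) (by simpa using hk)
  induction x using Int.induction_on with
  | zero => exact hzero
  | succ i ih => rw [hstep, ih]
  | pred i ih => have := hstep (-i - 1); rw [sub_add_cancel, ih] at this; linarith

theorem Int.ediv_le_ediv_add_one {a b n : ℤ} (hn : 0 < n) (h : a ≤ b + n) :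
    a / n ≤ b / n + 1 := by
  calc a / n ≤ (b + n) / n := Int.ediv_le_ediv hn h
    _ = b / n + 1 := by simpa using Int.add_mul_ediv_right b 1 hn.ne'

section SignPattern

variable {ι : Type*} [LinearOrder ι] {u v : ι → ℤ}

theorem le_or_ge_of_monotone_of_spread_le_one (hu : Monotone u) (hv : Monotone v)
    (hu1 : ∀ i j, u i ≤ u j + 1) (hv1 : ∀ i j, v i ≤ v j + 1) :
    (∀ i, u i ≤ v i) ∨ ∀ i, v i ≤ u i := by
  by_contra! ⟨⟨i, hi⟩, ⟨j, hj⟩⟩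
  rcases le_total i j with hij | hji
  · linarith [hv1 j i, hu hij]
  · linarith [hu1 i j, hv hji]

theorem sum_sub_min_le_max_sum_sub [Fintype ι] (hu : Monotone u) (hv : Monotone v)
    (hu1 : ∀ i j, u i ≤ u j + 1) (hv1 : ∀ i j, v i ≤ v j + 1) :
    ∑ i, (u i - min (u i) (v i)) ≤ max 0 (∑ i, (u i - v i)) := by
  rcases le_or_ge_of_monotone_of_spread_le_one hu hv hu1 hv1 with huv | hvu
  · simp [huv]
  · simp [hvu]

end SignPattern

section CompleteGraph

variable {n : ℕ}

theorem lapG_eK_apply (i j : Fin n) :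
    lapG (eK n) i j = if j = i then (n : ℤ) - 1 else -1 := by
  have hdeg : ∑ k, ((eK n i k : ℕ) : ℤ) = n - 1 := by
    simp [eK, Finset.sum_ite, Finset.filter_ne, Nat.cast_pred i.pos]
  unfold lapG
  split_ifs with h
  · exact hdeg
  · simp [eK, Ne.symm h]

theorem sum_smul_lapG_eK_apply (a : Fin n → ℤ) (j : Fin n) :
    (∑ i, a i • lapG (eK n) i) j = n * a j - ∑ i, a i := by
  have hterm : ∀ i, a i • lapG (eK n) i j = (if j = i then n * a i else 0) - a i := by
    intro i
    rw [lapG_eK_apply, smul_eq_mul]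
    split_ifs <;> ring
  simp only [Finset.sum_apply, Pi.smul_apply, hterm, Finset.sum_sub_distrib, Finset.sum_ite_eq,
    Finset.mem_univ, if_true]

def floorSum (f : Fin n → ℤ) (c : ℤ) : ℤ := ∑ i, (f i + c) / n

theorem effG_eK_iff [NeZero n] (f : Fin n → ℤ) :
    effG (eK n) f ↔ ∃ c, c ≤ floorSum f c := by
  have hn : (0 : ℤ) < n := by exact_mod_cast NeZero.pos n
  constructor
  · rintro ⟨g, ⟨a, hfg⟩, hg⟩
    refine ⟨∑ i, a i, Finset.sum_le_sum fun j _ => ?_⟩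
    have hj : f j + ∑ i, a i = g j + a j * n := by
      have := congrFun hfg j
      rw [Pi.sub_apply, sum_smul_lapG_eK_apply] at this
      linarith
    rw [hj, Int.add_mul_ediv_right _ _ hn.ne']
    linarith [Int.ediv_nonneg (hg j) hn.le]
  · rintro ⟨c, hc⟩
    -- round each `(f j + c) / n` down, then remove the surplus at vertex `0` so that `∑ a = c`
    set s : Fin n → ℤ := Pi.single 0 (floorSum f c - c)
    set a : Fin n → ℤ := fun j => (f j + c) / n - s j
    have hsum : ∑ i, a i = c := by simp [a, s, Finset.sum_sub_distrib, floorSum]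
    refine ⟨f - ∑ i, a i • lapG (eK n) i, ⟨a, sub_sub_cancel _ _⟩, fun j => ?_⟩
    have hs : 0 ≤ s j := (Pi.single_nonneg.mpr (sub_nonneg.mpr hc) : 0 ≤ s) j
    have hdiv := Int.mul_ediv_add_emod (f j + c) n
    rw [Pi.sub_apply, sum_smul_lapG_eK_apply, hsum, mul_sub]
    linarith [Int.emod_nonneg (f j + c) hn.ne', mul_nonneg hn.le hs]

theorem not_effG_eK_iff [NeZero n] (f : Fin n → ℤ) :
    ¬ effG (eK n) f ↔ ∀ c, floorSum f c < c := by
  simp [effG_eK_iff]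

theorem sum_range_floorSum_sub (f L : Fin n → ℤ) :
    ∑ c ∈ Finset.range n, (floorSum f c - floorSum (f - L) c) = ∑ i, L i := by
  rcases n.eq_zero_or_pos with rfl | hn
  · simp
  simp only [floorSum, ← Finset.sum_sub_distrib]
  rw [Finset.sum_comm]
  refine Finset.sum_congr rfl fun i _ => ?_
  rw [Finset.sum_sub_distrib, Int.sum_range_add_ediv hn, Pi.sub_apply,
    Int.sum_range_add_ediv hn]
  ring

theorem max_le_floorSum_sub_floorSum [NeZero n] {f L : Fin n → ℤ} (hL : 0 ≤ L)
    (hne : ¬ effG (eK n) (f - L)) (c : ℤ) :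
    max 0 (floorSum f c + 1 - c) ≤ floorSum f c - floorSum (f - L) c := by
  have hn : (0 : ℤ) < n := by exact_mod_cast NeZero.pos n
  have hlt := (not_effG_eK_iff _).mp hne c
  have hle : floorSum (f - L) c ≤ floorSum f c :=
    Finset.sum_le_sum fun i _ => Int.ediv_le_ediv hn (by simpa using hL i)
  omega

theorem one_add_rankG_eK_eq [NeZero n] {f lam : Fin n → ℤ} (hlam : 0 ≤ lam)
    (hne : ¬ effG (eK n) (f - lam))
    (hopt : ∀ c, floorSum f c - floorSum (f - lam) c ≤ max 0 (floorSum f c + 1 - c)) :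
    1 + rankG (eK n) f = ∑ i, lam i := by
  suffices IsLeast {d : ℤ | ∃ L : Fin n → ℤ,
      (∀ i, 0 ≤ L i) ∧ (∑ i, L i) = d ∧ ¬ effG (eK n) (f - L)} (∑ i, lam i) by
    rw [rankG, this.csInf_eq]
    ring
  refine ⟨⟨lam, hlam, rfl, hne⟩, ?_⟩
  rintro _ ⟨L, hL, rfl, hLne⟩
  calc ∑ i, lam i = ∑ c ∈ Finset.range n, (floorSum f c - floorSum (f - lam) c) :=
        (sum_range_floorSum_sub f lam).symm
    _ ≤ ∑ c ∈ Finset.range n, max 0 (floorSum f c + 1 - c) :=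
        Finset.sum_le_sum fun c _ => hopt c
    _ ≤ ∑ c ∈ Finset.range n, (floorSum f c - floorSum (f - L) c) :=
        Finset.sum_le_sum fun c _ => max_le_floorSum_sub_floorSum hL hLne c
    _ = ∑ i, L i := sum_range_floorSum_sub f L

end CompleteGraph

theorem Finset.sum_range_skip_add {M : Type*} [AddCommMonoid M] (g : ℤ → M) {r m : ℕ}
    (hrm : r ≤ m) :
    ∑ i ∈ Finset.range m, g ((i : ℤ) - if i < r then 1 else 0) + g ((r : ℤ) - 1) =
      ∑ k ∈ Finset.range (m + 1), g ((k : ℤ) - 1) := by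
  induction m, hrm using Nat.le_induction with
  | base =>
    rw [Finset.sum_range_succ]
    congr 1
    exact Finset.sum_congr rfl fun i hi => by simp [Finset.mem_range.mp hi]
  | succ m hrm ih =>
    rw [Finset.sum_range_succ, add_right_comm, ih, Finset.sum_range_succ _ (m + 1)]
    simp [hrm.not_gt]

def parkingTarget (q r : ℤ) (i : ℕ) : ℤ := i - q - if (i : ℤ) < r then 1 else 0

theorem parkingTarget_mono (q r : ℤ) : Monotone (parkingTarget q r) := by
  intro i j hij
  have : (i : ℤ) ≤ j := by exact_mod_cast hij
  simp only [parkingTarget]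
  split_ifs <;> omega

theorem parkingTarget_le_add {q r : ℤ} {m : ℕ} {i : ℕ} (hi : i < m) (j : ℕ) :
    parkingTarget q r i ≤ parkingTarget q r j + m := by
  simp only [parkingTarget]
  split_ifs <;> omega

theorem sum_parkingTarget_ediv_add_sink (q : ℤ) {r : ℤ} {m : ℕ} (hr0 : 0 ≤ r)
    (hrm : r ≤ m) (c : ℤ) :
    ∑ i : Fin m, (parkingTarget q r i + c) / (m + 1 : ℕ) +
      (q * m + r - 1 + c) / (m + 1 : ℕ) = c - 1 := by
  lift r to ℕ using hr0
  set g : ℤ → ℤ := fun k => (k - q + c) / (m + 1 : ℕ)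
  have hsink : (q * m + r - 1 + c) / (m + 1 : ℕ) = g (r - 1) + q := by
    rw [← Int.add_mul_ediv_right _ _ (by positivity)]
    push_cast
    ring_nf
  have hterm : ∀ i : ℕ, (parkingTarget q r i + c) / (m + 1 : ℕ) =
      g ((i : ℤ) - if i < r then 1 else 0) := by
    intro i
    simp only [parkingTarget, g, Nat.cast_lt]
    ring_nf
  have hwindow : ∑ k ∈ Finset.range (m + 1), g ((k : ℤ) - 1) = -1 - q + c := by
    rw [← Int.sum_range_add_ediv (n := m + 1) (by omega) (-1 - q + c)]
    exact Finset.sum_congr rfl fun k _ => by simp only [g]; ring_nf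
  rw [Fin.sum_univ_eq_sum_range (fun i => (parkingTarget q r i + c) / (m + 1 : ℕ))]
  simp only [hterm, hsink, ← add_assoc, Finset.sum_range_skip_add g (Nat.cast_le.mp hrm),
    hwindow]
  ring

theorem sum_ediv_sub_min_parkingTarget_le {m : ℕ} {u : Fin m → ℤ} (hmono : Monotone u)
    (hbound : ∀ i, 0 ≤ u i ∧ u i ≤ i) (q r c : ℤ) :
    ∑ i, ((u i + c) / (m + 1 : ℕ) -
        min ((u i + c) / (m + 1 : ℕ)) ((parkingTarget q r i + c) / (m + 1 : ℕ))) ≤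
      max 0 (∑ i, ((u i + c) / (m + 1 : ℕ) - (parkingTarget q r i + c) / (m + 1 : ℕ))) := by
  have hN : (0 : ℤ) < (m + 1 : ℕ) := by positivity
  have hdiv_mono : Monotone fun x : ℤ => (x + c) / (m + 1 : ℕ) :=
    fun x y hxy => Int.ediv_le_ediv hN (by linarith)
  refine sum_sub_min_le_max_sum_sub (fun i j hij => hdiv_mono (hmono hij))
    (fun i j hij => hdiv_mono (parkingTarget_mono q r hij))
    (fun i j => Int.ediv_le_ediv_add_one hN ?_) (fun i j => Int.ediv_le_ediv_add_one hN ?_)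
  · have := hbound i
    have := hbound j
    omega
  · have := parkingTarget_le_add (q := q) (r := r) i.isLt j
    omega

theorem parkingK.le_of_sorted {n : ℕ} {f : Fin n → ℤ} (hpark : parkingK f)
    (hsort : ∀ i j : Fin n, i ≤ j → (j : ℕ) < n - 1 → f i ≤ f j) (i : Fin n)
    (hi : (i : ℕ) < n - 1) : f i ≤ i := by
  set s : Fin n := ⟨n - 1, by omega⟩
  obtain ⟨k, hk, hfk⟩ := hpark.2 (Finset.Ico i s) ⟨i, Finset.mem_Ico.mpr ⟨le_rfl, hi⟩⟩
    fun k hk => (Finset.mem_Ico.mp hk).2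
  have hik := hsort i k (Finset.mem_Ico.mp hk).1 (Finset.mem_Ico.mp hk).2
  rw [Fin.card_Ico] at hfk
  simp only [s] at hfk
  omega

theorem one_add_rankG_eK_of_monotone {m : ℕ} {f : Fin (m + 1) → ℤ} {q r : ℤ}
    (hmono : Monotone fun i : Fin m => f i.castSucc)
    (hbound : ∀ i : Fin m, 0 ≤ f i.castSucc ∧ f i.castSucc ≤ i)
    (hr0 : 0 ≤ r) (hrm : r ≤ m) (hsink : f (Fin.last m) = q * m + r - 1) :
    1 + rankG (eK (m + 1)) f = ∑ i : Fin m, max 0 (f i.castSucc - parkingTarget q r i) := by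
  set N : ℤ := ((m + 1 : ℕ) : ℤ)
  have hN : 0 < N := by positivity
  set lam : Fin (m + 1) → ℤ :=
    Fin.snoc (α := fun _ => ℤ) (fun i : Fin m => max 0 (f i.castSucc - parkingTarget q r i)) 0
  have hsplit : ∀ g : Fin (m + 1) → ℤ, ∀ c, floorSum g c =
      ∑ i : Fin m, (g i.castSucc + c) / N + (g (Fin.last m) + c) / N :=
    fun g c => Fin.sum_univ_castSucc _
  have hwindow : ∀ c, ∑ i : Fin m, (parkingTarget q r i + c) / N + (f (Fin.last m) + c) / N =
      c - 1 := by
    intro c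
    rw [hsink]
    exact sum_parkingTarget_ediv_add_sink q hr0 hrm c
  have hfloor : ∀ c, floorSum (f - lam) c = ∑ i : Fin m, min ((f i.castSucc + c) / N)
      ((parkingTarget q r i + c) / N) + (f (Fin.last m) + c) / N := by
    intro c
    have hdiv_mono : Monotone fun x : ℤ => (x + c) / N :=
      fun x y hxy => Int.ediv_le_ediv hN (by linarith)
    have hlam : ∀ i : Fin m, (f - lam) i.castSucc = min (f i.castSucc) (parkingTarget q r i) := by
      intro i
      simp only [Pi.sub_apply, lam, Fin.snoc_castSucc]
      omega
    simp only [hsplit, hlam, hdiv_mono.map_min]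
    simp [lam]
  refine (one_add_rankG_eK_eq (lam := lam) ?_ ?_ ?_).trans ?_
  · intro i
    induction i using Fin.lastCases <;> simp [lam]
  · rw [not_effG_eK_iff]
    intro c
    have := Finset.sum_le_sum (s := Finset.univ) fun (i : Fin m) _ =>
      min_le_right ((f i.castSucc + c) / N) ((parkingTarget q r i + c) / N)
    linarith [hfloor c, hwindow c]
  · intro c
    have hsign := sum_ediv_sub_min_parkingTarget_le hmono hbound q r c
    rw [hfloor, hsplit]
    simp only [Finset.sum_sub_distrib] at hsign
    convert hsign using 1
    · ring
    · congr 1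
      linarith [hwindow c]
  · rw [Fin.sum_univ_castSucc]
    simp [lam]

theorem stmt15 (n : ℕ) (hn : 2 ≤ n) (f : Fin n → ℤ)
    (hsort : ∀ i j : Fin n, i ≤ j → (j : ℕ) < n - 1 → f i ≤ f j)
    (hpark : parkingK f)
    (q r : ℤ) (hr0 : 0 ≤ r) (hr1 : r < (n : ℤ) - 1)
    (hqr : f ⟨n - 1, by omega⟩ + 1 = q * ((n : ℤ) - 1) + r) :
    1 + rankG (eK n) f =
      ∑ i : Fin n, (if (i : ℕ) < n - 1 then
        max 0 (q - (((i : ℕ) : ℤ) - f i) + (if ((i : ℕ) : ℤ) < r then 1 else 0))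
        else 0) := by
  obtain ⟨m, rfl⟩ : ∃ m, n = m + 1 := ⟨n - 1, by omega⟩
  have hsink : f (Fin.last m) = q * m + r - 1 := by
    push_cast at hqr
    change f (Fin.last m) + 1 = _ at hqr
    linarith
  rw [one_add_rankG_eK_of_monotone (q := q) (r := r) ?_ ?_ hr0 (by push_cast at hr1; omega) hsink,
    Fin.sum_univ_castSucc]
  · simp only [Fin.val_castSucc, Fin.val_last, Nat.add_sub_cancel, Fin.is_lt, if_true,
      lt_irrefl, if_false, add_zero, parkingTarget]
    exact Finset.sum_congr rfl fun i _ => by ring_nf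
  · exact fun i j hij => hsort _ _ (Fin.castSucc_le_castSucc_iff.mpr hij) (by simp)
  · exact fun i => ⟨hpark.1 _ (by simp),
      by simpa using hpark.le_of_sorted hsort i.castSucc (by simp)⟩
end

section
/- For any word w in D_n, Phi(w) is the unique conjugate of the reversal of w that lies in D_n; in particular Phi(w) is a cyclic rotation of reverse(w). -/
/-- Number of occurrences of the letter `a` (encoded `true`). -/
def countA (w : List Bool) : ℕ := (w.filter (fun x => x = true)).length

/-- Number of occurrences of the letter `b` (encoded `false`). -/
def countB (w : List Bool) : ℕ := (w.filter (fun x => x = false)).length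

/-- `delta w = |w|_a - |w|_b`. -/
def delta (w : List Bool) : ℤ := (countA w : ℤ) - (countB w : ℤ)

/-- `D_n`: words with `n-1` a's, `n` b's, every strict prefix with `delta ≥ 0`. -/
def inDn (n : ℕ) (w : List Bool) : Prop :=
  countA w = n - 1 ∧ countB w = n ∧
    ∀ u v : List Bool, w = u ++ v → v ≠ [] → 0 ≤ delta u

lemma countA_append (x y : List Bool) : countA (x ++ y) = countA x + countA y := by
  simp [countA]

lemma countB_append (x y : List Bool) : countB (x ++ y) = countB x + countB y := by
  simp [countB]

lemma countA_reverse (x : List Bool) : countA x.reverse = countA x := by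
  simp [countA, List.filter_reverse]

lemma countB_reverse (x : List Bool) : countB x.reverse = countB x := by
  simp [countB, List.filter_reverse]

lemma delta_append (x y : List Bool) : delta (x ++ y) = delta x + delta y := by
  simp only [delta, countA_append, countB_append]
  push_cast
  ring

lemma delta_reverse (x : List Bool) : delta x.reverse = delta x := by
  simp [delta, countA_reverse, countB_reverse]

lemma countA_add_countB (x : List Bool) : countA x + countB x = x.length := by
  induction x with
  | nil => simp [countA, countB]
  | cons h t ih =>
    cases h <;> simp only [countA, countB, List.filter_cons] at ih ⊢ <;> simp <;>
      simp at ih <;> omega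

theorem stmt17 (n : ℕ) (w u v : List Bool) (hw : w = u ++ v) (hin : inDn n w)
    (hmax : ∀ u' v' : List Bool, w = u' ++ v' →
      delta u' ≤ delta u ∧ (delta u' = delta u → u'.length ≤ u.length)) :
    (∃ s t : List Bool, w.reverse = s ++ t ∧ u.reverse ++ v.reverse = t ++ s) ∧
      inDn n (u.reverse ++ v.reverse) ∧
      ∀ s t : List Bool, w.reverse = s ++ t → inDn n (t ++ s) →
        t ++ s = u.reverse ++ v.reverse := by
  obtain ⟨hA, hB, hpref⟩ := hin
  have hwkey : w = [] ∨ delta w = -1 := by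
    rcases Nat.eq_zero_or_pos n with h0 | h1
    · left
      have hc := countA_add_countB w
      have hx : w.length = 0 := by omega
      exact List.length_eq_zero_iff.mp hx
    · right
      unfold delta
      rw [hA, hB]
      have : ((n - 1 : ℕ) : ℤ) = (n : ℤ) - 1 := by omega
      omega
  have huv : delta w = delta u + delta v := by rw [hw, delta_append]
  refine ⟨⟨v.reverse, u.reverse, by simp [hw], rfl⟩, ?_, ?_⟩
  · refine ⟨?_, ?_, ?_⟩
    · rw [countA_append, countA_reverse, countA_reverse, ← countA_append, ← hw, hA]
    · rw [countB_append, countB_reverse, countB_reverse, ← countB_append, ← hw, hB]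
    · intro s t hst ht
      rcases List.append_eq_append_iff.mp hst with ⟨r, hr1, hr2⟩ | ⟨r, hr1, hr2⟩
      · -- s = u.reverse ++ r, v.reverse = r ++ t
        have hv : v = t.reverse ++ r.reverse := by
          rw [← List.reverse_reverse v, hr2, List.reverse_append]
        have hw' : w = (u ++ t.reverse) ++ r.reverse := by
          rw [hw, hv, List.append_assoc]
        have h1 := (hmax (u ++ t.reverse) r.reverse hw').1
        have h2 := (hmax (u ++ t.reverse) r.reverse hw').2
        have hne : delta (u ++ t.reverse) ≠ delta u := by
          intro he
          have hl := h2 he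
          rw [List.length_append, List.length_reverse] at hl
          have : t.length = 0 := by omega
          exact ht (List.length_eq_zero_iff.mp this)
        have hdw : delta w = -1 := by
          rcases hwkey with h | h
          · exfalso
            rw [h] at hw
            have hv0 : v = [] := (List.append_eq_nil_iff.mp hw.symm).2
            rw [hv0] at hr2
            simp at hr2
            exact ht hr2.2
          · exact h
        have e1 : delta (u ++ t.reverse) = delta u + delta t := by
          rw [delta_append, delta_reverse]
        have e2 : delta v = delta t + delta r := by
          rw [hv, delta_append, delta_reverse, delta_reverse]
        have e3 : delta s = delta u + delta r := by
          rw [hr1, delta_append, delta_reverse]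
        omega
      · -- u.reverse = s ++ r, t = r ++ v.reverse
        have hu : u = r.reverse ++ s.reverse := by
          rw [← List.reverse_reverse u, hr1, List.reverse_append]
        have hw' : w = r.reverse ++ (s.reverse ++ v) := by
          rw [hw, hu, List.append_assoc]
        have h1 := (hmax r.reverse (s.reverse ++ v) hw').1
        have e1 : delta u = delta r + delta s := by
          rw [hu, delta_append, delta_reverse, delta_reverse]
        have e2 : delta r.reverse = delta r := delta_reverse r
        omega
  · intro s t hst hDn
    obtain ⟨hA', hB', hpref'⟩ := hDn
    have hwps : w = t.reverse ++ s.reverse := by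
      rw [← List.reverse_reverse w, hst, List.reverse_append]
    have hp1 : t.reverse <+: w := ⟨s.reverse, hwps.symm⟩
    have hp2 : u <+: w := ⟨v, hw.symm⟩
    rcases List.prefix_or_prefix_of_prefix hp1 hp2 with ⟨m, hm⟩ | ⟨m, hm⟩
    · -- t.reverse ++ m = u
      rcases eq_or_ne m [] with hm0 | hm0
      · -- t.reverse = u
        rw [hm0, List.append_nil] at hm
        have hqv : s.reverse = v := by
          have : u ++ s.reverse = u ++ v := by rw [← hm, ← hwps, hw, ← hm]
          exact List.append_cancel_left this
        rw [← hm, ← hqv]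
        simp [← hm]
      · -- m ≠ [], contradiction
        exfalso
        have hwnil : w ≠ [] := by
          intro h
          rw [h] at hw
          have hu0 : u = [] := (List.append_eq_nil_iff.mp hw.symm).1
          rw [hu0] at hm
          simp at hm
          rw [← hm.2] at hm0
          exact hm0 rfl
        have hdw : delta w = -1 := hwkey.resolve_left hwnil
        -- s.reverse = m ++ v
        have hsv : s.reverse = m ++ v := by
          have : t.reverse ++ s.reverse = t.reverse ++ (m ++ v) := by
            rw [← hwps, hw, ← hm, List.append_assoc]
          exact List.append_cancel_left this
        -- t ++ s = (t ++ v.reverse) ++ m.reverse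
        have hsplit : t ++ s = (t ++ v.reverse) ++ m.reverse := by
          rw [List.append_assoc, ← List.reverse_append, ← hsv, List.reverse_reverse]
        have hmr : m.reverse ≠ [] := by
          intro h
          exact hm0 (by rw [← List.reverse_reverse m, h]; rfl)
        have h0 := hpref' (t ++ v.reverse) m.reverse hsplit hmr
        have e1 : delta (t ++ v.reverse) = delta t.reverse + delta v := by
          rw [delta_append, delta_reverse, delta_reverse]
        have h1 := (hmax t.reverse s.reverse hwps).1
        omega
    · -- u ++ m = t.reverse
      rcases eq_or_ne m [] with hm0 | hm0
      · rw [hm0, List.append_nil] at hm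
        have hqv : s.reverse = v := by
          have : u ++ s.reverse = u ++ v := by rw [hm, ← hwps, hw, hm]
          exact List.append_cancel_left this
        rw [hm, ← hqv]
        simp [hm]
      · by_cases hq : u = [] ∧ s = []
        · -- trivial: w = t.reverse, v = w
          obtain ⟨hu0, hs0⟩ := hq
          have htw : t = w.reverse := by rw [hwps, hs0]; simp
          rw [hs0, htw, hw, hu0]
          simp
        · exfalso
          -- t = m.reverse ++ u.reverse, remainder u.reverse ++ s ≠ []
          have ht' : t = m.reverse ++ u.reverse := by
            rw [← List.reverse_reverse t, ← hm, List.reverse_append]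
          have hsplit : t ++ s = m.reverse ++ (u.reverse ++ s) := by
            rw [ht', List.append_assoc]
          have hrem : u.reverse ++ s ≠ [] := by
            intro h
            obtain ⟨h1, h2⟩ := List.append_eq_nil_iff.mp h
            exact hq ⟨by rw [← List.reverse_reverse u, h1]; rfl, h2⟩
          have h0 := hpref' m.reverse (u.reverse ++ s) hsplit hrem
          rw [delta_reverse] at h0
          have h1 := (hmax t.reverse s.reverse hwps).1
          have h2 := (hmax t.reverse s.reverse hwps).2
          have e1 : delta t.reverse = delta u + delta m := by
            rw [← hm, delta_append]
          have hlen : t.reverse.length ≤ u.length → False := by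
            intro hl
            rw [← hm, List.length_append] at hl
            have : m.length = 0 := by omega
            exact hm0 (List.length_eq_zero_iff.mp this)
          have : delta t.reverse = delta u := by omega
          exact hlen (h2 this)
end
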